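/- arXiv:1211.0935 — 2 statements merged into one kernel-verified Lean document; each statement's English description precedes it below -/
import Mathlib

section
/- The function φ̃₀(s) = (e^{-s²/4}/√(4π)) · ∫₀ˢ e^{w²/4} dw tends to 0 as s → +∞; in fact, s·φ̃₀(s) → 1/√π as s → +∞. -/
/-! Write `E(w) = exp (w²/4)` and `F(s) = ∫₀ˢ E`, so that
`s·φ̃₀(s) = s F(s) / (E(s) √(4π))`. Since `2E' = w E`, integrating `w E(w) ≤ s E(w)` over
`[0, s]` gives `2(E(s) - 1) ≤ s F(s)`, and integrating `E(w) ≤ (w/a) E(w) + E(a)` (for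
`0 ≤ w`, `0 < a`) gives `F(s) ≤ (2/a)(E(s) - 1) + s E(a)`. With `a = s - 1` we have
`s² E(s - 1) / E(s) → 0`, so both bounds squeeze `s F(s) / E(s)` to `2`, and
`2 / √(4π) = 1 / √π`. -/

open Real Filter Topology intervalIntegral

lemma hasDerivAt_two_mul_exp_sq_div_four (w : ℝ) :
    HasDerivAt (fun w : ℝ => 2 * exp (w ^ 2 / 4)) (w * exp (w ^ 2 / 4)) w := by
  refine ((((hasDerivAt_pow 2 w).div_const 4).exp).const_mul 2).congr_deriv ?_
  push_cast
  ring

lemma intervalIntegrable_mul_exp_sq_div_four (a b : ℝ) :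
    IntervalIntegrable (fun w : ℝ => w * exp (w ^ 2 / 4)) MeasureTheory.volume a b :=
  (by fun_prop : Continuous fun w : ℝ => w * exp (w ^ 2 / 4)).intervalIntegrable _ _

lemma integral_mul_exp_sq_div_four (a b : ℝ) :
    ∫ w in a..b, w * exp (w ^ 2 / 4) = 2 * exp (b ^ 2 / 4) - 2 * exp (a ^ 2 / 4) :=
  integral_eq_sub_of_hasDerivAt (fun w _ => hasDerivAt_two_mul_exp_sq_div_four w)
    (intervalIntegrable_mul_exp_sq_div_four a b)

lemma intervalIntegrable_exp_sq_div_four (a b : ℝ) :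
    IntervalIntegrable (fun w : ℝ => exp (w ^ 2 / 4)) MeasureTheory.volume a b :=
  (by fun_prop : Continuous fun w : ℝ => exp (w ^ 2 / 4)).intervalIntegrable _ _

lemma two_mul_exp_sq_div_four_sub_one_le {s : ℝ} (hs : 0 ≤ s) :
    2 * (exp (s ^ 2 / 4) - 1) ≤ s * ∫ w in (0 : ℝ)..s, exp (w ^ 2 / 4) := by
  have h :
      ∫ w in (0 : ℝ)..s, w * exp (w ^ 2 / 4) ≤ ∫ w in (0 : ℝ)..s, s * exp (w ^ 2 / 4) :=
    integral_mono_on hs (intervalIntegrable_mul_exp_sq_div_four 0 s)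
      ((intervalIntegrable_exp_sq_div_four 0 s).const_mul s)
      fun w hw => mul_le_mul_of_nonneg_right hw.2 (exp_pos _).le
  rw [integral_mul_exp_sq_div_four, integral_const_mul] at h
  simpa [mul_sub] using h

lemma exp_sq_div_four_le {a w : ℝ} (ha : 0 < a) (hw : 0 ≤ w) :
    exp (w ^ 2 / 4) ≤ w / a * exp (w ^ 2 / 4) + exp (a ^ 2 / 4) := by
  rcases le_total w a with hwa | haw
  · have : exp (w ^ 2 / 4) ≤ exp (a ^ 2 / 4) := exp_le_exp.2 (by gcongr)
    have : 0 ≤ w / a * exp (w ^ 2 / 4) := by positivity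
    linarith
  · have : exp (w ^ 2 / 4) ≤ w / a * exp (w ^ 2 / 4) :=
      le_mul_of_one_le_left (exp_pos _).le ((one_le_div ha).2 haw)
    linarith [exp_pos (a ^ 2 / 4)]

lemma integral_exp_sq_div_four_le {a s : ℝ} (ha : 0 < a) (hs : 0 ≤ s) :
    ∫ w in (0 : ℝ)..s, exp (w ^ 2 / 4)
      ≤ 2 / a * (exp (s ^ 2 / 4) - 1) + s * exp (a ^ 2 / 4) := by
  have hint :
      IntervalIntegrable (fun w : ℝ => w / a * exp (w ^ 2 / 4)) MeasureTheory.volume 0 s :=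
    (by fun_prop : Continuous fun w : ℝ => w / a * exp (w ^ 2 / 4)).intervalIntegrable _ _
  have h := integral_mono_on hs (intervalIntegrable_exp_sq_div_four 0 s)
    (hint.add intervalIntegrable_const) fun w hw => exp_sq_div_four_le ha hw.1
  have hmul : ∫ w in (0 : ℝ)..s, w / a * exp (w ^ 2 / 4)
      = a⁻¹ * ∫ w in (0 : ℝ)..s, w * exp (w ^ 2 / 4) := by
    rw [← integral_const_mul]
    congr 1 with w
    ring
  rw [integral_add hint intervalIntegrable_const, hmul, integral_mul_exp_sq_div_four,
    integral_const, smul_eq_mul, sub_zero] at h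
  refine h.trans_eq ?_
  rw [zero_pow two_ne_zero, zero_div, exp_zero]
  ring

lemma tendsto_exp_neg_sq_div_four : Tendsto (fun s : ℝ => exp (-s ^ 2 / 4)) atTop (𝓝 0) := by
  refine tendsto_exp_comp_nhds_zero.2 ?_
  simp_rw [neg_div]
  exact tendsto_neg_atTop_atBot.comp ((tendsto_pow_atTop two_ne_zero).atTop_div_const four_pos)

lemma tendsto_sq_mul_exp_one_sub_two_mul_div_four :
    Tendsto (fun s : ℝ => s ^ 2 * exp ((1 - 2 * s) / 4)) atTop (𝓝 0) := by
  have h := ((tendsto_pow_mul_exp_neg_atTop_nhds_zero 2).comp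
    (tendsto_id.atTop_div_const two_pos)).const_mul (4 * exp (1 / 4))
  rw [mul_zero] at h
  refine h.congr fun s => ?_
  rw [show (1 - 2 * s) / 4 = 1 / 4 + -(s / 2) by ring, exp_add]
  simp only [Function.comp_apply, id]
  ring

lemma tendsto_div_sub_one : Tendsto (fun s : ℝ => s / (s - 1)) atTop (𝓝 1) := by
  have hsub : Tendsto (fun s : ℝ => s - 1) atTop atTop := by
    simpa [sub_eq_add_neg] using tendsto_atTop_add_const_right atTop (-1) tendsto_id
  have h := (tendsto_inv_atTop_zero.comp hsub).const_add 1
  rw [add_zero] at h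
  refine h.congr' ?_
  filter_upwards [eventually_gt_atTop 1] with s hs
  have : s - 1 ≠ 0 := by linarith
  simp only [Function.comp_apply]
  field_simp
  ring

lemma tendsto_mul_exp_neg_sq_div_four_mul_integral :
    Tendsto (fun s : ℝ => s * (exp (-s ^ 2 / 4) * ∫ w in (0 : ℝ)..s, exp (w ^ 2 / 4)))
      atTop (𝓝 2) := by
  have hlower : Tendsto (fun s : ℝ => 2 * (1 - exp (-s ^ 2 / 4))) atTop (𝓝 2) := by
    simpa using (tendsto_exp_neg_sq_div_four.const_sub 1).const_mul 2
  have hupper : Tendsto (fun s : ℝ => 2 * (s / (s - 1)) * (1 - exp (-s ^ 2 / 4))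
      + s ^ 2 * exp ((1 - 2 * s) / 4)) atTop (𝓝 2) := by
    simpa using ((tendsto_div_sub_one.const_mul 2).mul
      (tendsto_exp_neg_sq_div_four.const_sub 1)).add tendsto_sq_mul_exp_one_sub_two_mul_div_four
  have hinv (s : ℝ) : exp (-s ^ 2 / 4) = (exp (s ^ 2 / 4))⁻¹ := by rw [neg_div, exp_neg]
  refine tendsto_of_tendsto_of_tendsto_of_le_of_le' hlower hupper ?_ ?_
  · filter_upwards [eventually_ge_atTop 0] with s hs
    calc 2 * (1 - exp (-s ^ 2 / 4)) = exp (-s ^ 2 / 4) * (2 * (exp (s ^ 2 / 4) - 1)) := by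
          rw [hinv]; field_simp
      _ ≤ exp (-s ^ 2 / 4) * (s * ∫ w in (0 : ℝ)..s, exp (w ^ 2 / 4)) :=
          mul_le_mul_of_nonneg_left (two_mul_exp_sq_div_four_sub_one_le hs) (exp_pos _).le
      _ = _ := by ring
  · filter_upwards [eventually_gt_atTop 1] with s hs
    have hs1 : s - 1 ≠ 0 := by linarith
    have hshift : exp ((s - 1) ^ 2 / 4) = exp ((1 - 2 * s) / 4) * exp (s ^ 2 / 4) := by
      rw [← exp_add]; ring_nf
    calc s * (exp (-s ^ 2 / 4) * ∫ w in (0 : ℝ)..s, exp (w ^ 2 / 4))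
        = exp (-s ^ 2 / 4) * (s * ∫ w in (0 : ℝ)..s, exp (w ^ 2 / 4)) := by ring
      _ ≤ exp (-s ^ 2 / 4) * (s * (2 / (s - 1) * (exp (s ^ 2 / 4) - 1)
          + s * exp ((s - 1) ^ 2 / 4))) := by
          gcongr
          exact integral_exp_sq_div_four_le (by linarith) (by linarith)
      _ = _ := by rw [hinv, hshift]; field_simp

/-- `φ̃₀(s) → 0` as `s → +∞`; in fact `s·φ̃₀(s) → 1/√π` as `s → +∞`. -/
theorem stmt_9 (φt₀ : ℝ → ℝ)
    (hφt₀ : ∀ s : ℝ, φt₀ s =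
      Real.exp (-s ^ 2 / 4) / Real.sqrt (4 * π) * ∫ w in (0 : ℝ)..s, Real.exp (w ^ 2 / 4)) :
    Tendsto φt₀ atTop (nhds 0) ∧
    Tendsto (fun s => s * φt₀ s) atTop (nhds (1 / Real.sqrt π)) := by
  have hsqrt : 2 / sqrt (4 * π) = 1 / sqrt π := by
    rw [show (4 : ℝ) * π = 2 ^ 2 * π by ring, sqrt_mul (by positivity), sqrt_sq zero_le_two,
      div_mul_cancel_left₀ two_ne_zero, one_div]
  have hmul : Tendsto (fun s => s * φt₀ s) atTop (𝓝 (1 / sqrt π)) := by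
    rw [← hsqrt]
    refine (tendsto_mul_exp_neg_sq_div_four_mul_integral.div_const _).congr fun s => ?_
    rw [hφt₀]
    ring
  refine ⟨?_, hmul⟩
  have h := hmul.mul tendsto_inv_atTop_zero
  rw [mul_zero] at h
  refine h.congr' ?_
  filter_upwards [eventually_gt_atTop 0] with s hs
  field_simp
end

section
/- For each non-negative integer p, the function ũ_p(x,t) = (Dt)^{-(p+1)/2} φ̃_p(x/√(Dt)), where φ̃_p is the p-th derivative of φ̃₀(s) = (e^{-s²/4}/√(4π)) ∫₀ˢ e^{w²/4} dw, satisfies both the diffusion equation ∂ũ_p/∂t = D ∂²ũ_p/∂x² and the similarity relation θ^{p+1} ũ_p(θx, θ²t) = ũ_p(x,t) for θ > 0, t > 0. -/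
/-!
`φ̃₀` solves the first-order equation `φ' + (s/2) φ = 1/√(4π)` (it is `F(s/2)/√π`, `F` Dawson's
function). Differentiating it `p + 1` times gives `φ̃_p'' + (s/2) φ̃_p' + ((p+1)/2) φ̃_p = 0`, and for
any profile `g`, `(Dt)^r g(x/√(Dt))` solves `u_t = D u_xx` exactly when `g'' + (s/2) g' - r g = 0`.
The similarity relation is homogeneity: `x/√(Dt)` is invariant under `(x, t) ↦ (θx, θ²t)` while
`(Dt)^{-(p+1)/2}` picks up the factor `θ^{-(p+1)}`.
-/

open Real
open scoped ContDiff

lemma hasDerivAt_iteratedDeriv {𝕜 F : Type*} [NontriviallyNormedField 𝕜] [NormedAddCommGroup F]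
    [NormedSpace 𝕜 F] {f : 𝕜 → F} (hf : ContDiff 𝕜 ∞ f) (p : ℕ) (s : 𝕜) :
    HasDerivAt (iteratedDeriv p f) (iteratedDeriv (p + 1) f s) s := by
  rw [iteratedDeriv_succ]
  exact (hf.differentiable_iteratedDeriv p (by exact_mod_cast ENat.natCast_lt_top p) s).hasDerivAt

section LinearFirstOrder

variable {f : ℝ → ℝ} {c : ℝ}

lemma contDiff_of_hasDerivAt_neg_half_mul_add_const
    (hf : ∀ s, HasDerivAt f (-(s / 2) * f s + c) s) : ContDiff ℝ ∞ f := by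
  have hderiv : deriv f = fun s => -(s / 2) * f s + c := funext fun s => (hf s).deriv
  refine contDiff_infty.mpr fun n => ?_
  induction n with
  | zero => exact contDiff_zero.mpr (continuous_iff_continuousAt.mpr fun s => (hf s).continuousAt)
  | succ n ih =>
    rw [Nat.cast_succ, contDiff_succ_iff_deriv, hderiv]
    exact ⟨fun s => (hf s).differentiableAt, by simp, by fun_prop⟩

lemma iteratedDeriv_add_two_of_hasDerivAt (hf : ∀ s, HasDerivAt f (-(s / 2) * f s + c) s)
    (p : ℕ) (s : ℝ) :
    iteratedDeriv (p + 2) f s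
      = -(((p : ℝ) + 1) / 2) * iteratedDeriv p f s - s / 2 * iteratedDeriv (p + 1) f s := by
  have hd := hasDerivAt_iteratedDeriv (contDiff_of_hasDerivAt_neg_half_mul_add_const hf)
  induction p generalizing s with
  | zero =>
    have hf' : iteratedDeriv 1 f = fun u => -(u / 2) * f u + c :=
      funext fun u => by rw [iteratedDeriv_one]; exact (hf u).deriv
    have h : HasDerivAt (fun u => -(u / 2) * f u + c)
        (-(1 / 2) * f s + -(s / 2) * (-(s / 2) * f s + c)) s :=
      (((hasDerivAt_id s).div_const 2).neg.mul (hf s)).add_const c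
    rw [iteratedDeriv_succ, hf', h.deriv, iteratedDeriv_zero]
    push_cast; ring
  | succ n ih =>
    have h : HasDerivAt
        (fun u => -(((n : ℝ) + 1) / 2) * iteratedDeriv n f u - u / 2 * iteratedDeriv (n + 1) f u)
        (-(((n : ℝ) + 1) / 2) * iteratedDeriv (n + 1) f s
          - (1 / 2 * iteratedDeriv (n + 1) f s + s / 2 * iteratedDeriv (n + 2) f s)) s :=
      ((hd n s).const_mul _).sub (((hasDerivAt_id s).div_const 2).mul (hd (n + 1) s))
    rw [iteratedDeriv_succ, funext ih, h.deriv, ih]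
    beta_reduce
    push_cast; ring

end LinearFirstOrder

noncomputable def similaritySolution (D r : ℝ) (g : ℝ → ℝ) (x t : ℝ) : ℝ :=
  (D * t) ^ r * g (x / √(D * t))

lemma similaritySolution_heat {D r t : ℝ} {g g' g'' : ℝ → ℝ}
    (hg : ∀ s, HasDerivAt g (g' s) s) (hg' : ∀ s, HasDerivAt g' (g'' s) s)
    (hode : ∀ s, g'' s = r * g s - s / 2 * g' s) (hDt : 0 < D * t) (x : ℝ) :
    deriv (fun τ => similaritySolution D r g x τ) t
      = D * deriv (deriv fun y => similaritySolution D r g y t) x := by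
  set S := √(D * t)
  have hS0 : S ≠ 0 := (sqrt_pos.mpr hDt).ne'
  have hSsq : S ^ 2 = D * t := sq_sqrt hDt.le
  have hlin : HasDerivAt (fun τ => D * τ) D t := by simpa using (hasDerivAt_id t).const_mul D
  have htime : HasDerivAt (fun τ => similaritySolution D r g x τ)
      (r * (D * t) ^ (r - 1) * D * g (x / S)
        + (D * t) ^ r * (g' (x / S) * ((0 * S - x * (1 / (2 * S) * D)) / S ^ 2))) t :=
    ((hasDerivAt_rpow_const (Or.inl hDt.ne')).comp t hlin).mul
      ((hg _).comp t ((hasDerivAt_const t x).div ((hasDerivAt_sqrt hDt.ne').comp t hlin) hS0))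
  have hscale (y : ℝ) : HasDerivAt (fun y => y / S) (1 / S) y := by
    simpa using (hasDerivAt_id y).div_const S
  have hspace : deriv (fun y => similaritySolution D r g y t)
      = fun y => (D * t) ^ r * (g' (y / S) * (1 / S)) :=
    funext fun y => (((hg _).comp y (hscale y)).const_mul _).deriv
  have hspace' : HasDerivAt (fun y => (D * t) ^ r * (g' (y / S) * (1 / S)))
      ((D * t) ^ r * (g'' (x / S) * (1 / S) * (1 / S))) x :=
    (((hg' _).comp x (hscale x)).mul_const _).const_mul _
  rw [htime.deriv, hspace, hspace'.deriv, hode, rpow_sub hDt, rpow_one]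
  have hx : x = x / S * S := by field_simp
  generalize x / S = s at hx ⊢
  rw [hx, ← hSsq]
  field_simp
  ring

lemma similaritySolution_rescale {D t θ : ℝ} (g : ℝ → ℝ) (n : ℕ) (hθ : 0 < θ) (hDt : 0 ≤ D * t)
    (x : ℝ) :
    θ ^ n * similaritySolution D (-(n : ℝ) / 2) g (θ * x) (θ ^ 2 * t)
      = similaritySolution D (-(n : ℝ) / 2) g x t := by
  have hθ2 : D * (θ ^ 2 * t) = θ ^ 2 * (D * t) := by ring
  have hpow : (θ ^ 2) ^ (-(n : ℝ) / 2) = (θ ^ n)⁻¹ := by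
    rw [← rpow_natCast θ 2, ← rpow_mul hθ.le, ← rpow_natCast, ← rpow_neg hθ.le]
    push_cast; ring_nf
  unfold similaritySolution
  rw [hθ2, mul_rpow (by positivity) hDt, hpow, sqrt_mul (by positivity), sqrt_sq hθ.le,
    mul_div_mul_left _ _ hθ.ne']
  field_simp

noncomputable def dawsonProfile (s : ℝ) : ℝ :=
  exp (-s ^ 2 / 4) / √(4 * π) * ∫ w in (0 : ℝ)..s, exp (w ^ 2 / 4)

lemma hasDerivAt_dawsonProfile (s : ℝ) :
    HasDerivAt dawsonProfile (-(s / 2) * dawsonProfile s + 1 / √(4 * π)) s := by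
  have hexp : HasDerivAt (fun s : ℝ => exp (-s ^ 2 / 4) / √(4 * π))
      (exp (-s ^ 2 / 4) * (-(2 * s ^ 1) / 4) / √(4 * π)) s :=
    (((hasDerivAt_pow 2 s).neg.div_const 4).exp).div_const _
  have hint : HasDerivAt (fun u : ℝ => ∫ w in (0 : ℝ)..u, exp (w ^ 2 / 4)) (exp (s ^ 2 / 4)) s :=
    ((by fun_prop : Continuous fun w : ℝ => exp (w ^ 2 / 4)).integral_hasStrictDerivAt 0 s).hasDerivAt
  refine (hexp.mul hint).congr_deriv ?_
  have hcancel : exp (-s ^ 2 / 4) * exp (s ^ 2 / 4) = 1 := by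
    rw [← exp_add, show -s ^ 2 / 4 + s ^ 2 / 4 = 0 by ring, exp_zero]
  rw [div_mul_eq_mul_div (exp (-s ^ 2 / 4)), hcancel, dawsonProfile]
  ring

/-- For each non-negative integer `p`, `ũ_p(x,t) = (Dt)^{-(p+1)/2} φ̃_p(x/√(Dt))`
satisfies both the diffusion equation and the similarity relation
`θ^{p+1} ũ_p(θx, θ²t) = ũ_p(x,t)`. -/
theorem stmt_12 (D : ℝ) (hD : 0 < D) (p : ℕ)
    (φt₀ : ℝ → ℝ)
    (hφt₀ : ∀ s : ℝ, φt₀ s =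
      Real.exp (-s ^ 2 / 4) / Real.sqrt (4 * π) * ∫ w in (0 : ℝ)..s, Real.exp (w ^ 2 / 4))
    (ut : ℝ → ℝ → ℝ)
    (hut : ∀ x t : ℝ, ut x t =
      (D * t) ^ (-((p : ℝ) + 1) / 2 : ℝ) * iteratedDeriv p φt₀ (x / Real.sqrt (D * t))) :
    (∀ (x t : ℝ), 0 < t →
      deriv (fun τ => ut x τ) t = D * deriv (deriv (fun y => ut y t)) x) ∧
    (∀ (θ x t : ℝ), 0 < θ → 0 < t →
      θ ^ (p + 1) * ut (θ * x) (θ ^ 2 * t) = ut x t) := by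
  obtain rfl : φt₀ = dawsonProfile := funext hφt₀
  have hsmooth := contDiff_of_hasDerivAt_neg_half_mul_add_const hasDerivAt_dawsonProfile
  have hu : ut = similaritySolution D (-((p + 1 : ℕ) : ℝ) / 2) (iteratedDeriv p dawsonProfile) := by
    ext x t
    rw [hut]
    push_cast
    rfl
  subst hu
  refine ⟨fun x t ht => ?_, fun θ x t hθ ht => ?_⟩
  · refine similaritySolution_heat (hasDerivAt_iteratedDeriv hsmooth p)
      (hasDerivAt_iteratedDeriv hsmooth (p + 1)) (fun s => ?_) (mul_pos hD ht) x
    rw [iteratedDeriv_add_two_of_hasDerivAt hasDerivAt_dawsonProfile]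
    push_cast
    ring
  · exact similaritySolution_rescale _ _ hθ (mul_pos hD ht).le x
end
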